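/- arXiv:1502.01750 — 6 statements merged into one kernel-verified Lean document; each statement's English description precedes it below -/
import Mathlib

section
/- The function C(θ) = (2/sinh(2a)) · sinh(a√(2(1+cos θ)))/√(2(1+cos θ)), for θ ∈ [0,π] and a > 0, satisfies C(0) = 1 and lim_{θ↓0} (C(0) − C(θ))/θ² exists and is a strictly positive real number; i.e., C has fractal index 2. -/
/-!
Since `√(2(1 + cos θ)) = 2 cos (θ/2)`, one has `C θ = G (cos (θ/2)) / sinh (2a)` with
`G y = sinh (2a y) / y`; in particular `C 0 = G 1 / sinh (2a) = 1`. As `cos (θ/2) - 1 ~ -θ²/8`,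
the chain rule for difference quotients gives `(C 0 - C θ)/θ² → G'(1) / (8 sinh (2a))`, and
`G'(1) = 2a cosh (2a) - sinh (2a) > 0` because `tanh x < x` for `x > 0`.
-/

open Real Set Filter Topology

theorem Real.sinh_lt_mul_cosh {x : ℝ} (hx : 0 < x) : sinh x < x * cosh x := by
  have hderiv (y : ℝ) : HasDerivAt (fun t => t * cosh t - sinh t) (y * sinh y) y := by
    have := ((hasDerivAt_id y).mul (hasDerivAt_cosh y)).sub (hasDerivAt_sinh y)
    exact this.congr_deriv (by simp only [id_eq]; ring)
  have hmono : StrictMonoOn (fun t => t * cosh t - sinh t) (Ici 0) := by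
    refine strictMonoOn_of_deriv_pos (convex_Ici 0) (by fun_prop) fun y hy => ?_
    rw [interior_Ici] at hy
    rw [(hderiv y).deriv]
    exact mul_pos hy (sinh_pos_iff.2 hy)
  simpa using hmono self_mem_Ici hx.le hx

theorem Real.sqrt_two_mul_one_add_cos {θ : ℝ} (hθ : θ ∈ Icc (-π) π) :
    √(2 * (1 + cos θ)) = 2 * cos (θ / 2) := by
  have hcos : 0 ≤ cos (θ / 2) :=
    cos_nonneg_of_mem_Icc ⟨by linarith [hθ.1], by linarith [hθ.2]⟩
  rw [← sqrt_sq (by positivity : 0 ≤ 2 * cos (θ / 2)), mul_pow, cos_sq,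
    mul_div_cancel₀ _ two_ne_zero]
  ring_nf

theorem Real.one_sub_cos_eq_sq_mul_sinc_sq (x : ℝ) :
    1 - cos x = x ^ 2 / 2 * sinc (x / 2) ^ 2 := by
  rcases eq_or_ne x 0 with rfl | hx
  · simp
  rw [sinc_of_ne_zero (by positivity), div_pow, sin_sq_eq_half_sub, mul_div_cancel₀ _ two_ne_zero]
  field_simp

theorem Real.tendsto_cos_mul_sub_one_div_sq (c : ℝ) :
    Tendsto (fun x => (cos (c * x) - 1) / x ^ 2) (𝓝[≠] 0) (𝓝 (-c ^ 2 / 2)) := by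
  have hcont :
      Tendsto (fun x => -c ^ 2 / 2 * sinc (c * x / 2) ^ 2) (𝓝 0) (𝓝 (-c ^ 2 / 2)) := by
    simpa using (by fun_prop : Continuous fun x => -c ^ 2 / 2 * sinc (c * x / 2) ^ 2).tendsto 0
  refine (hcont.mono_left nhdsWithin_le_nhds).congr' ?_
  filter_upwards [self_mem_nhdsWithin] with x (hx : x ≠ 0)
  rw [← neg_sub, one_sub_cos_eq_sq_mul_sinc_sq]
  field_simp

theorem Real.tendsto_cos_mul_nhdsNE {c : ℝ} (hc : c ≠ 0) :
    Tendsto (fun x => cos (c * x)) (𝓝[≠] 0) (𝓝[≠] 1) := by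
  refine tendsto_nhdsWithin_of_tendsto_nhds_of_eventually_within _ ?_ ?_
  · have hcont : Continuous fun x => cos (c * x) := by fun_prop
    simpa using (hcont.tendsto 0).mono_left nhdsWithin_le_nhds
  · have hsmall : ∀ᶠ x in 𝓝 (0 : ℝ), c * x ∈ Ioo (-(2 * π)) (2 * π) :=
      ((continuous_const_mul c).tendsto' 0 0 (mul_zero c)).eventually
        (Ioo_mem_nhds (by linarith [pi_pos]) (by linarith [pi_pos]))
    filter_upwards [nhdsWithin_le_nhds hsmall, self_mem_nhdsWithin] with x hx (hx0 : x ≠ 0)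
    rw [mem_compl_singleton_iff, Ne, cos_eq_one_iff_of_lt_of_lt hx.1 hx.2]
    exact mul_ne_zero hc hx0

theorem HasDerivAt.tendsto_sub_comp_div {𝕜 α : Type*} [NontriviallyNormedField 𝕜]
    {f : 𝕜 → 𝕜} {f' x L : 𝕜} {g h : α → 𝕜} {l : Filter α} (hf : HasDerivAt f f' x)
    (hg : Tendsto g l (𝓝[≠] x)) (hgh : Tendsto (fun t => (g t - x) / h t) l (𝓝 L)) :
    Tendsto (fun t => (f (g t) - f x) / h t) l (𝓝 (f' * L)) := by
  refine ((hf.tendsto_slope.comp hg).mul hgh).congr' ?_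
  filter_upwards [hg self_mem_nhdsWithin] with t ht
  have : g t - x ≠ 0 := sub_ne_zero.2 ht
  simp only [Function.comp_apply, slope_def_field]
  field_simp

theorem Real.hasDerivAt_sinh_mul_div_self (k : ℝ) {x : ℝ} (hx : x ≠ 0) :
    HasDerivAt (fun y => sinh (k * y) / y) ((k * x * cosh (k * x) - sinh (k * x)) / x ^ 2) x := by
  have := (((hasDerivAt_id x).const_mul k).sinh).div (hasDerivAt_id x) hx
  exact this.congr_deriv (by simp only [id_eq]; ring)

theorem vonMisesFisher_fractal_index_general (a : ℝ) (ha : 0 < a)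
    (C : ℝ → ℝ)
    (hC : ∀ θ ∈ Ico (0:ℝ) π,
      C θ = (2 / Real.sinh (2 * a)) *
        (Real.sinh (a * Real.sqrt (2 * (1 + Real.cos θ))) / Real.sqrt (2 * (1 + Real.cos θ)))) :
    C 0 = 1 ∧ ∃ b : ℝ, 0 < b ∧
      Tendsto (fun θ => (C 0 - C θ) / θ ^ 2) (nhdsWithin 0 (Ioi 0)) (nhds b) := by
  set G : ℝ → ℝ := fun y => sinh (2 * a * y) / y
  have hsinh : 0 < sinh (2 * a) := sinh_pos_iff.2 (by positivity)
  have hCG : ∀ θ ∈ Ico 0 π, C θ = G (cos (θ / 2)) / sinh (2 * a) := by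
    intro θ hθ
    have hcos : 0 < cos (θ / 2) :=
      cos_pos_of_mem_Ioo ⟨by linarith [hθ.1, pi_pos], by linarith [hθ.2]⟩
    rw [hC θ hθ, sqrt_two_mul_one_add_cos ⟨by linarith [hθ.1, pi_pos], hθ.2.le⟩]
    simp only [G]
    field_simp
  have hC0 : C 0 = 1 := by
    rw [hCG 0 ⟨le_rfl, pi_pos⟩]
    simp [G, hsinh.ne']
  refine ⟨hC0, (2 * a * cosh (2 * a) - sinh (2 * a)) / (8 * sinh (2 * a)), ?_, ?_⟩
  · have := sinh_lt_mul_cosh (by positivity : 0 < 2 * a)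
    exact div_pos (by linarith) (by positivity)
  have hG : HasDerivAt G (2 * a * cosh (2 * a) - sinh (2 * a)) 1 := by
    simpa using hasDerivAt_sinh_mul_div_self (2 * a) one_ne_zero
  have hcos := (tendsto_cos_mul_nhdsNE (by norm_num : (2 : ℝ)⁻¹ ≠ 0)).mono_left
    (nhdsGT_le_nhdsNE 0)
  have hcos_sub := (tendsto_cos_mul_sub_one_div_sq 2⁻¹).mono_left (nhdsGT_le_nhdsNE 0)
  have hlim := (hG.tendsto_sub_comp_div hcos hcos_sub).neg.div_const (sinh (2 * a))
  rw [show ∀ d, d / (8 * sinh (2 * a)) = -(d * (-2⁻¹ ^ 2 / 2)) / sinh (2 * a) by intro d; ring]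
  refine hlim.congr' ?_
  filter_upwards [Ioo_mem_nhdsGT pi_pos] with θ hθ
  rw [hCG 0 ⟨le_rfl, pi_pos⟩, hCG θ ⟨hθ.1.le, hθ.2⟩, zero_div, cos_zero]
  ring_nf

/-- The von Mises–Fisher correlation function
`C θ = (2/sinh(2a)) * sinh (a √(2(1+cos θ))) / √(2(1+cos θ))` on `[0,π)`,
extended continuously by `C π = 2a/sinh(2a)`,
satisfies `C 0 = 1` and has fractal index `2`: the limit of `(C 0 - C θ)/θ²`
as `θ ↓ 0` exists and is strictly positive. -/
theorem vonMisesFisher_fractal_index (a : ℝ) (ha : 0 < a)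
    (C : ℝ → ℝ)
    (hC : ∀ θ ∈ Ico (0:ℝ) π,
      C θ = (2 / Real.sinh (2 * a)) *
        (Real.sinh (a * Real.sqrt (2 * (1 + Real.cos θ))) / Real.sqrt (2 * (1 + Real.cos θ))))
    (hCpi : C π = 2 * a / Real.sinh (2 * a)) :
    C 0 = 1 ∧ ∃ b : ℝ, 0 < b ∧
      Tendsto (fun θ => (C 0 - C θ) / θ ^ 2) (nhdsWithin 0 (Ioi 0)) (nhds b) :=
  vonMisesFisher_fractal_index_general a ha C hC
end

section
/- For r ∈ (0, π/2), the function C(θ) = (1/(π(1 − cos r))) · (π − arccos((cos θ − cos² r)/(1 − cos² r)) − 2 cos r · arccos(cot r · (1 − cos θ)/sin θ)) · 𝟙(θ ≤ 2r) on [0,π] satisfies lim_{θ↓0} (C(0) − C(θ))/θ = b for some constant b > 0; i.e., C has fractal index 1. -/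
/-!
For `θ ≤ 2r` the half-angle formulas turn both arccosines in `C` into arcsines of functions
vanishing at `0`: `arccos ((cos θ - cos² r) / sin² r) = 2 arcsin (sin (θ/2) / sin r)` and
`(1 - cos θ) / sin θ = tan (θ/2)`. So near `0⁺`, `C 0 - C θ` is a function of `θ` that vanishes
and is differentiable at `0`, and the limit is its derivative
`(1 - cos² r) / (π (1 - cos r) sin r) = sin r / (π (1 - cos r)) > 0`.
-/

open Real Set Filter Topology

namespace Real

theorem arccos_one_sub_two_mul_sq {y : ℝ} (hy₀ : 0 ≤ y) (hy₁ : y ≤ 1) :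
    arccos (1 - 2 * y ^ 2) = 2 * arcsin y := by
  rw [← sin_arcsin (by linarith) hy₁, ← cos_two_mul_eq_one_sub, sin_arcsin (by linarith) hy₁]
  exact arccos_cos (by linarith [arcsin_nonneg.mpr hy₀]) (by linarith [arcsin_le_pi_div_two y])

theorem one_sub_cos_div_sin (θ : ℝ) : (1 - cos θ) / sin θ = tan (θ / 2) := by
  obtain ⟨h, rfl⟩ : ∃ h, θ = 2 * h := ⟨θ / 2, by ring⟩
  rw [mul_div_cancel_left₀ h two_ne_zero, cos_two_mul_eq_one_sub, sin_two_mul, tan_eq_sin_div_cos]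
  rcases eq_or_ne (sin h) 0 with hs | hs
  · simp [hs]
  rcases eq_or_ne (cos h) 0 with hc | hc
  · simp [hc]
  field_simp
  ring

theorem hasDerivAt_arcsin_const_mul_comp_half {f : ℝ → ℝ} (hf : HasDerivAt f 1 0) (hf₀ : f 0 = 0)
    (a : ℝ) : HasDerivAt (fun θ ↦ arcsin (a * f (θ / 2))) (a / 2) 0 := by
  have hhalf : HasDerivAt (fun θ : ℝ ↦ θ / 2) (1 / 2) 0 := (hasDerivAt_id 0).div_const 2
  rw [← zero_div (2 : ℝ)] at hf
  have h : HasDerivAt (fun θ ↦ arcsin (a * f (θ / 2)))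
      (1 / √(1 - (a * f (0 / 2)) ^ 2) * (a * (1 * (1 / 2)))) 0 :=
    (hasDerivAt_arcsin (by simp [hf₀]) (by simp [hf₀])).comp 0 ((hf.comp 0 hhalf).const_mul a)
  convert h using 1
  simp [hf₀, div_eq_mul_inv]

end Real

theorem arccos_cos_sub_cos_sq_div_one_sub_cos_sq {r θ : ℝ} (hr₀ : 0 < r) (hr : r ≤ π / 2)
    (hθ : θ ∈ Icc 0 (2 * r)) :
    arccos ((cos θ - cos r ^ 2) / (1 - cos r ^ 2)) = 2 * arcsin ((sin r)⁻¹ * sin (θ / 2)) := by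
  have hs : 0 < sin r := sin_pos_of_pos_of_lt_pi hr₀ (by linarith [pi_pos])
  have hhalf₀ : 0 ≤ sin (θ / 2) :=
    sin_nonneg_of_nonneg_of_le_pi (by linarith [hθ.1]) (by linarith [hθ.2])
  have hhalf : sin (θ / 2) ≤ sin r :=
    sin_le_sin_of_le_of_le_pi_div_two (by linarith [hθ.1, pi_pos]) hr (by linarith [hθ.2])
  rw [← arccos_one_sub_two_mul_sq (by positivity) (by rwa [inv_mul_le_one₀ hs])]
  have hcos : cos θ = 1 - 2 * sin (θ / 2) ^ 2 := by
    rw [← cos_two_mul_eq_one_sub, mul_div_cancel₀ θ two_ne_zero]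
  congr 1
  rw [← sin_sq, hcos, cos_sq']
  field_simp
  ring

/-- For `0 < θ ≤ 2r` this is `π (1 - cos r) (C 0 - C θ)`. -/
noncomputable def capDeficit (r θ : ℝ) : ℝ :=
  2 * arcsin ((sin r)⁻¹ * sin (θ / 2)) - 2 * cos r * arcsin (cos r / sin r * tan (θ / 2))

@[simp]
theorem capDeficit_zero (r : ℝ) : capDeficit r 0 = 0 := by
  simp [capDeficit]

theorem hasDerivAt_capDeficit {r : ℝ} (hs : sin r ≠ 0) : HasDerivAt (capDeficit r) (sin r) 0 := by
  have hsin : HasDerivAt sin 1 0 := by simpa using hasDerivAt_sin 0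
  have htan : HasDerivAt tan 1 0 := by simpa using hasDerivAt_tan (x := 0) (by simp)
  refine (((hasDerivAt_arcsin_const_mul_comp_half hsin sin_zero (sin r)⁻¹).const_mul 2).sub
    ((hasDerivAt_arcsin_const_mul_comp_half htan tan_zero (cos r / sin r)).const_mul
      (2 * cos r))).congr_deriv ?_
  field_simp
  linear_combination -sin_sq_add_cos_sq r

/-- The correlation function of the uniform kernel on a spherical cap of radius
`r ∈ (0, π/2)` has fractal index `1`: `(C 0 - C θ)/θ → b > 0` as `θ ↓ 0`. -/
theorem uniform_kernel_fractal_index (r : ℝ) (hr : r ∈ Ioo 0 (π / 2))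
    (C : ℝ → ℝ) (hC0 : C 0 = 1)
    (hC : ∀ θ ∈ Ioc (0:ℝ) π,
      C θ = (1 / (π * (1 - Real.cos r))) *
        ((π - Real.arccos ((Real.cos θ - Real.cos r ^ 2) / (1 - Real.cos r ^ 2))
          - 2 * Real.cos r *
              Real.arccos ((Real.cos r / Real.sin r) * ((1 - Real.cos θ) / Real.sin θ))) *
          (if θ ≤ 2 * r then 1 else 0))) :
    ∃ b : ℝ, 0 < b ∧
      Tendsto (fun θ => (C 0 - C θ) / θ) (nhdsWithin 0 (Ioi 0)) (nhds b) := by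
  obtain ⟨hr₀, hr⟩ := hr
  have hs : 0 < sin r := sin_pos_of_pos_of_lt_pi hr₀ (by linarith [pi_pos])
  have hc : 0 < 1 - cos r :=
    sub_pos.mpr (cos_zero ▸ cos_lt_cos_of_nonneg_of_le_pi le_rfl (by linarith [pi_pos]) hr₀)
  have hdeficit : ∀ θ ∈ Ioc 0 (2 * r), C 0 - C θ = capDeficit r θ / (π * (1 - cos r)) := by
    intro θ hθ
    rw [hC0, hC θ ⟨hθ.1, hθ.2.trans (by linarith)⟩, if_pos hθ.2,
      arccos_cos_sub_cos_sq_div_one_sub_cos_sq hr₀ hr.le (Ioc_subset_Icc_self hθ),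
      one_sub_cos_div_sin, arccos_eq_pi_div_two_sub_arcsin, capDeficit]
    field_simp
    ring
  refine ⟨sin r / (π * (1 - cos r)), by positivity,
    ((hasDerivAt_capDeficit hs.ne').div_const _).tendsto_slope_zero_right.congr' ?_⟩
  filter_upwards [Ioc_mem_nhdsGT (by positivity : (0 : ℝ) < 2 * r)] with θ hθ
  rw [zero_add, capDeficit_zero, zero_div, sub_zero, smul_eq_mul, hdeficit θ hθ, inv_mul_eq_div]
end

section
/- For the uniform kernel k(θ) = 𝟙(θ ≤ π/2) on the sphere S², the associated isotropic correlation function is C(θ) = 1 − θ/π for θ ∈ [0,π]. -/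
/-!
For `0 < θ < π` and `0 < η ≤ π/2`, the inner integral measures the `φ ∈ [0, π]` with
`cos φ ≥ -cot θ cot η`, which is `arccos (-cot θ cot η)`. For `θ < π/2` this is `π` as long as
`η ≤ π/2 - θ`, and on `[π/2 - θ, π/2]` the integrand `arccos (-cot θ cot η) sin η` has the
primitive `-cos η · arccos (-cot θ cot η) + arcsin (cos θ / sin η)`; the two pieces add up to
`π - θ`. Since `arccos (-x) = π - arccos x`, replacing `θ` by `π - θ` turns the outer integral
`I` into `π - I`, which covers `θ ≥ π/2`. The endpoints `θ = 0, π` are direct.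
-/

open Real Set MeasureTheory intervalIntegral

theorem integral_ite_le {f : ℝ → ℝ} {a b c : ℝ} (hac : a ≤ c) (hcb : c ≤ b) :
    ∫ x in a..b, (if x ≤ c then f x else 0) = ∫ x in a..c, f x := by
  have hind : (fun x => if x ≤ c then f x else 0) = (Iic c).indicator f := by
    ext x; simp [indicator_apply]
  rw [hind, integral_of_le (hac.trans hcb), setIntegral_indicator measurableSet_Iic,
    Ioc_inter_Iic, inf_eq_right.2 hcb, integral_of_le hac]

theorem le_cos_iff_le_arccos {b φ : ℝ} (hφ : φ ∈ Ioc 0 π) : b ≤ cos φ ↔ φ ≤ arccos b := by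
  constructor
  · intro h
    simpa [arccos_cos hφ.1.le hφ.2] using antitone_arccos h
  · intro h
    have hb : b < 1 := arccos_pos.1 (hφ.1.trans_le h)
    have hcos : cos (arccos b) ≤ cos φ :=
      cos_le_cos_of_nonneg_of_le_pi hφ.1.le (arccos_le_pi b) h
    rcases lt_or_ge b (-1) with hb' | hb'
    · linarith [neg_one_le_cos φ]
    · rwa [cos_arccos hb' hb.le] at hcos

theorem integral_ite_le_cos (b : ℝ) :
    ∫ φ in (0:ℝ)..π, (if b ≤ cos φ then 1 else 0) = arccos b := by
  calc ∫ φ in (0:ℝ)..π, (if b ≤ cos φ then 1 else 0)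
      = ∫ φ in (0:ℝ)..π, (if φ ≤ arccos b then 1 else 0) := by
        refine integral_congr_ae (Filter.Eventually.of_forall fun φ hφ => ?_)
        rw [uIoc_of_le pi_pos.le] at hφ
        simp only [le_cos_iff_le_arccos hφ]
    _ = arccos b := by
        rw [integral_ite_le (arccos_nonneg b) (arccos_le_pi b)]
        simp

theorem integral_ite_arccos_le_pi_div_two {s : ℝ} (hs : 0 < s) (c : ℝ) :
    ∫ φ in (0:ℝ)..π, (if arccos (s * cos φ + c) ≤ π / 2 then 1 else 0) = arccos (-c / s) := by
  rw [← integral_ite_le_cos]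
  congr! 2 with φ
  have h : 0 ≤ s * cos φ + c ↔ -c / s ≤ cos φ := by
    rw [div_le_iff₀ hs]; constructor <;> intro <;> linarith
  simp only [arccos_le_pi_div_two, h]

theorem sqrt_one_sub_div_sq {y : ℝ} (hy : 0 < y) (x : ℝ) :
    √(1 - (x / y) ^ 2) = √(y ^ 2 - x ^ 2) / y := by
  rw [show 1 - (x / y) ^ 2 = (y ^ 2 - x ^ 2) / y ^ 2 by field_simp, sqrt_div' _ (sq_nonneg y),
    sqrt_sq hy.le]

/-- The `φ`-length of `{φ ∈ [0, π] | sin θ sin η cos φ + cos θ cos η ≥ 0}`, valid only when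
`sin θ sin η > 0` (otherwise the division returns junk). -/
noncomputable def latitudeArc (θ η : ℝ) : ℝ :=
  arccos (-(cos θ * cos η) / (sin θ * sin η))

noncomputable def latitudePrimitive (θ η : ℝ) : ℝ :=
  -cos η * latitudeArc θ η + arcsin (cos θ / sin η)

theorem intervalIntegrable_latitudeArc_mul_sin (θ a b : ℝ) :
    IntervalIntegrable (fun η => latitudeArc θ η * sin η) volume a b := by
  refine (intervalIntegrable_const (c := π)).mono_fun (by unfold latitudeArc; fun_prop)
    (Filter.Eventually.of_forall fun η => ?_)
  dsimp only [latitudeArc]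
  rw [norm_mul, norm_of_nonneg (arccos_nonneg _), norm_of_nonneg pi_pos.le]
  exact mul_le_of_le_one_right (arccos_nonneg _) (abs_sin_le_one η) |>.trans (arccos_le_pi _)

theorem latitudeArc_pi_sub (θ η : ℝ) : latitudeArc (π - θ) η = π - latitudeArc θ η := by
  rw [latitudeArc, latitudeArc, cos_pi_sub, sin_pi_sub, neg_mul, neg_neg, neg_div, arccos_neg]
  ring

theorem latitudeArc_eq_pi {θ η : ℝ} (hθ : 0 < sin θ) (hη : 0 < sin η) (h : 0 ≤ cos (θ + η)) :
    latitudeArc θ η = π := by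
  rw [cos_add] at h
  rw [latitudeArc, arccos_eq_pi, div_le_iff₀ (mul_pos hθ hη)]
  linarith

theorem hasDerivAt_latitudePrimitive {θ η : ℝ} (hθ : θ ∈ Ioo 0 (π / 2))
    (hη : η ∈ Ioo (π / 2 - θ) (π / 2)) :
    HasDerivAt (latitudePrimitive θ) (latitudeArc θ η * sin η) η := by
  obtain ⟨hθ₀, hθ₁⟩ := hθ
  obtain ⟨hη₀, hη₁⟩ := hη
  have hsθ : 0 < sin θ := sin_pos_of_pos_of_lt_pi hθ₀ (by linarith)
  have hcθ : 0 < cos θ := cos_pos_of_mem_Ioo ⟨by linarith, hθ₁⟩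
  have hsη : 0 < sin η := sin_pos_of_pos_of_lt_pi (by linarith) (by linarith)
  have hcη : 0 < cos η := cos_pos_of_mem_Ioo ⟨by linarith, hη₁⟩
  have hcθ_lt : cos θ < sin η := by
    rw [← sin_pi_div_two_sub]
    exact strictMonoOn_sin ⟨by linarith, by linarith⟩ ⟨by linarith, hη₁.le⟩ hη₀
  have hcos_add : cos θ * cos η < sin θ * sin η := by
    have := cos_neg_of_pi_div_two_lt_of_lt (x := θ + η) (by linarith) (by linarith)
    rw [cos_add] at this
    linarith
  have hs : 0 < sin θ * sin η := mul_pos hsθ hsη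
  have hb₀ : -(cos θ * cos η) / (sin θ * sin η) ≠ -1 := by
    rw [ne_eq, div_eq_iff hs.ne']; intro; linarith
  have hb₁ : -(cos θ * cos η) / (sin θ * sin η) ≠ 1 := by
    rw [ne_eq, div_eq_iff hs.ne']; intro; nlinarith
  have hq₀ : cos θ / sin η ≠ -1 := by
    rw [ne_eq, div_eq_iff hsη.ne']; intro; linarith
  have hq₁ : cos θ / sin η ≠ 1 := by
    rw [ne_eq, div_eq_iff hsη.ne']; intro; linarith
  have hb' : HasDerivAt (fun η => -(cos θ * cos η) / (sin θ * sin η))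
      (cos θ / (sin θ * sin η ^ 2)) η := by
    refine (((hasDerivAt_cos η).const_mul (cos θ)).neg.div
      ((hasDerivAt_sin η).const_mul (sin θ)) hs.ne').congr_deriv ?_
    simp only [Pi.neg_apply]
    field_simp
    linear_combination sin_sq_add_cos_sq η
  have hq' : HasDerivAt (fun η => cos θ / sin η) (-(cos θ * cos η) / sin η ^ 2) η := by
    refine ((hasDerivAt_const η (cos θ)).div (hasDerivAt_sin η) hsη.ne').congr_deriv ?_
    ring
  -- Both square roots reduce to `√(sin² η - cos² θ)`, so the non-`arccos` terms cancel.
  have hw : (sin θ * sin η) ^ 2 - (cos θ * cos η) ^ 2 = sin η ^ 2 - cos θ ^ 2 := by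
    linear_combination (sin η ^ 2) * sin_sq_add_cos_sq θ - (cos θ ^ 2) * sin_sq_add_cos_sq η
  have hw₀ : 0 < √(sin η ^ 2 - cos θ ^ 2) := sqrt_pos.2 (by nlinarith)
  refine (((hasDerivAt_cos η).neg.mul ((hasDerivAt_arccos hb₀ hb₁).comp η hb')).add
    ((hasDerivAt_arcsin hq₀ hq₁).comp η hq')).congr_deriv ?_
  rw [neg_div, neg_sq, sqrt_one_sub_div_sq hs, hw, sqrt_one_sub_div_sq hsη, latitudeArc]
  simp only [Pi.neg_apply, Function.comp_apply]
  field_simp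
  ring

theorem continuousOn_latitudePrimitive {θ : ℝ} (hθ : θ ∈ Ioo 0 (π / 2)) :
    ContinuousOn (latitudePrimitive θ) (Icc (π / 2 - θ) (π / 2)) := by
  have hsin : ∀ η ∈ Icc (π / 2 - θ) (π / 2), sin η ≠ 0 := fun η hη =>
    (sin_pos_of_pos_of_lt_pi (by linarith [hη.1, hθ.2]) (by linarith [hη.2, pi_pos])).ne'
  have hsθ : sin θ ≠ 0 := (sin_pos_of_pos_of_lt_pi hθ.1 (by linarith [hθ.2, pi_pos])).ne'
  refine ((continuous_cos.neg.continuousOn).mul (continuous_arccos.comp_continuousOn ?_)).add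
    (continuous_arcsin.comp_continuousOn ?_)
  · exact ContinuousOn.div (by fun_prop) (by fun_prop) fun η hη => mul_ne_zero hsθ (hsin η hη)
  · exact ContinuousOn.div (by fun_prop) (by fun_prop) hsin

theorem latitudePrimitive_pi_div_two {θ : ℝ} (hθ : θ ∈ Icc 0 (π / 2)) :
    latitudePrimitive θ (π / 2) = π / 2 - θ := by
  rw [latitudePrimitive, cos_pi_div_two, sin_pi_div_two, div_one, ← sin_pi_div_two_sub,
    arcsin_sin (by linarith [hθ.2, pi_pos]) (by linarith [hθ.1])]
  ring

theorem latitudePrimitive_pi_div_two_sub {θ : ℝ} (hθ : θ ∈ Ioo 0 (π / 2)) :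
    latitudePrimitive θ (π / 2 - θ) = π / 2 - π * sin θ := by
  have hsθ : 0 < sin θ := sin_pos_of_pos_of_lt_pi hθ.1 (by linarith [hθ.2, pi_pos])
  have hcθ : 0 < cos θ := cos_pos_of_mem_Ioo ⟨by linarith [hθ.1, pi_pos], hθ.2⟩
  rw [latitudePrimitive, latitudeArc, cos_pi_div_two_sub, sin_pi_div_two_sub, mul_comm (cos θ),
    neg_div, div_self (by positivity), arccos_neg_one, div_self hcθ.ne', arcsin_one]
  ring

theorem integral_latitudeArc_mul_sin_of_lt_pi_div_two {θ : ℝ} (hθ : θ ∈ Ioo 0 (π / 2)) :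
    ∫ η in (0:ℝ)..π / 2, latitudeArc θ η * sin η = π - θ := by
  obtain ⟨hθ₀, hθ₁⟩ := hθ
  have hsθ : 0 < sin θ := sin_pos_of_pos_of_lt_pi hθ₀ (by linarith [pi_pos])
  have hfull : ∫ η in (0:ℝ)..π / 2 - θ, latitudeArc θ η * sin η = π * (1 - sin θ) := by
    have hpi : ∀ η ∈ Ioc 0 (π / 2 - θ), latitudeArc θ η * sin η = π * sin η := fun η hη => by
      rw [latitudeArc_eq_pi hsθ (sin_pos_of_pos_of_lt_pi hη.1 (by linarith [hη.2, pi_pos]))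
        (cos_nonneg_of_mem_Icc ⟨by linarith [hη.1, pi_pos], by linarith [hη.2]⟩)]
    rw [integral_congr_ae (Filter.Eventually.of_forall fun η hη =>
      hpi η (by rwa [uIoc_of_le (by linarith)] at hη)), intervalIntegral.integral_const_mul,
      integral_sin, cos_zero, cos_pi_div_two_sub]
  have hcap : ∫ η in π / 2 - θ..π / 2, latitudeArc θ η * sin η = π * sin θ - θ := by
    rw [integral_eq_sub_of_hasDerivAt_of_le (by linarith)
      (continuousOn_latitudePrimitive ⟨hθ₀, hθ₁⟩)
      (fun η hη => hasDerivAt_latitudePrimitive ⟨hθ₀, hθ₁⟩ hη)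
      (intervalIntegrable_latitudeArc_mul_sin θ _ _),
      latitudePrimitive_pi_div_two ⟨hθ₀.le, hθ₁.le⟩, latitudePrimitive_pi_div_two_sub ⟨hθ₀, hθ₁⟩]
    ring
  rw [← integral_add_adjacent_intervals (intervalIntegrable_latitudeArc_mul_sin θ _ _)
    (intervalIntegrable_latitudeArc_mul_sin θ _ _), hfull, hcap]
  ring

theorem integral_latitudeArc_pi_sub_mul_sin (θ : ℝ) :
    ∫ η in (0:ℝ)..π / 2, latitudeArc (π - θ) η * sin η
      = π - ∫ η in (0:ℝ)..π / 2, latitudeArc θ η * sin η := by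
  simp only [latitudeArc_pi_sub, sub_mul]
  rw [integral_sub (Continuous.intervalIntegrable (by fun_prop) _ _)
    (intervalIntegrable_latitudeArc_mul_sin θ _ _), intervalIntegral.integral_const_mul,
    integral_sin, cos_zero, cos_pi_div_two]
  ring

theorem integral_latitudeArc_mul_sin {θ : ℝ} (hθ : θ ∈ Ioo 0 π) :
    ∫ η in (0:ℝ)..π / 2, latitudeArc θ η * sin η = π - θ := by
  rcases lt_trichotomy θ (π / 2) with hlt | rfl | hgt
  · exact integral_latitudeArc_mul_sin_of_lt_pi_div_two ⟨hθ.1, hlt⟩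
  · have h := integral_latitudeArc_pi_sub_mul_sin (π / 2)
    rw [show π - π / 2 = π / 2 by ring] at h
    linarith
  · rw [← sub_sub_cancel π θ, integral_latitudeArc_pi_sub_mul_sin,
      integral_latitudeArc_mul_sin_of_lt_pi_div_two ⟨by linarith [hθ.2], by linarith⟩]

/-- The `φ`-length of the part of the half circle of colatitude `η` (longitudes `φ ∈ [0, π]`)
at angular distance at most `π/2` from the point of colatitude `θ` and longitude `0`. -/
noncomputable def hemisphereArc (θ η : ℝ) : ℝ :=
  ∫ φ in (0:ℝ)..π, if arccos (sin θ * sin η * cos φ + cos θ * cos η) ≤ π / 2 then 1 else 0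

theorem hemisphereArc_eq_latitudeArc {θ η : ℝ} (hθ : 0 < sin θ) (hη : 0 < sin η) :
    hemisphereArc θ η = latitudeArc θ η :=
  integral_ite_arccos_le_pi_div_two (mul_pos hθ hη) _

theorem hemisphereArc_zero {η : ℝ} (hη : 0 ≤ cos η) : hemisphereArc 0 η = π := by
  simp [hemisphereArc, arccos_le_pi_div_two, hη]

theorem hemisphereArc_pi {η : ℝ} (hη : 0 < cos η) : hemisphereArc π η = 0 := by
  simp [hemisphereArc, arccos_le_pi_div_two, hη]

theorem integral_hemisphereArc_mul_sin {θ : ℝ} (hθ : θ ∈ Icc 0 π) :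
    ∫ η in (0:ℝ)..π / 2, hemisphereArc θ η * sin η = π - θ := by
  obtain ⟨hθ₀, hθ₁⟩ := hθ
  rcases hθ₀.eq_or_lt with rfl | hθ₀
  · rw [integral_congr (g := fun η => π * sin η) fun η hη => by
      rw [uIcc_of_le (by positivity)] at hη
      rw [hemisphereArc_zero (cos_nonneg_of_mem_Icc ⟨by linarith [hη.1, pi_pos], hη.2⟩)]]
    rw [intervalIntegral.integral_const_mul, integral_sin, cos_zero, cos_pi_div_two]
    ring
  rcases hθ₁.eq_or_lt with rfl | hθ₁
  · rw [sub_self, integral_of_le (by positivity), integral_Ioc_eq_integral_Ioo]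
    refine setIntegral_eq_zero_of_forall_eq_zero fun η hη => ?_
    rw [hemisphereArc_pi (cos_pos_of_mem_Ioo ⟨by linarith [hη.1, pi_pos], hη.2⟩), zero_mul]
  have hsθ : 0 < sin θ := sin_pos_of_pos_of_lt_pi hθ₀ hθ₁
  rw [← integral_latitudeArc_mul_sin ⟨hθ₀, hθ₁⟩]
  refine integral_congr_ae (Filter.Eventually.of_forall fun η hη => ?_)
  rw [uIoc_of_le (by positivity)] at hη
  rw [hemisphereArc_eq_latitudeArc hsθ
    (sin_pos_of_pos_of_lt_pi hη.1 (by linarith [hη.2, pi_pos]))]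

/-- For the uniform kernel `k θ = 𝟙(θ ≤ π/2)` on `S²`, the associated isotropic
correlation function `C(θ) = (2/c₂) ∫₀^π ∫₀^π k(η) k(arccos(sin θ sin η cos φ + cos θ cos η)) dφ sin η dη`
with `c₂ = 2π` equals `1 - θ/π` on `[0, π]`. -/
theorem uniform_kernel_correlation (θ : ℝ) (hθ : θ ∈ Icc (0:ℝ) π) :
    (2 / (2 * π)) *
      ∫ η in (0:ℝ)..π,
        ((if η ≤ π / 2 then (1:ℝ) else 0) *
          ∫ φ in (0:ℝ)..π,
            (if Real.arccos (Real.sin θ * Real.sin η * Real.cos φ + Real.cos θ * Real.cos η)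
                ≤ π / 2 then (1:ℝ) else 0)) * Real.sin η
      = 1 - θ / π := by
  calc _ = 2 / (2 * π) * ∫ η in (0:ℝ)..π / 2, hemisphereArc θ η * sin η := by
        simp only [ite_mul, one_mul, zero_mul]
        rw [integral_ite_le (by positivity) (by linarith [pi_pos])]
        rfl
    _ = 1 - θ / π := by
        rw [integral_hemisphereArc_mul_sin hθ]
        field_simp
end

section
/- Let a(θ,y,φ) = arccos(sin θ sin y cos φ + cos θ cos y) and q ∈ (0,1). There is a constant C > 0 such that for all θ ∈ (0, θ₀] with θ₀ sufficiently small, all y ∈ [2θ, π − θ], and all φ ∈ [0,π], the remainder R(θ,y,φ) = a(θ,y,φ)^{−q} − y^{−q} − (q cos φ / y^{q+1}) θ satisfies |R(θ,y,φ)| ≤ C θ² (1/|y−θ|^{q+2} + 1/(|y−θ|^{q+1} sin(y−θ))). -/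
/-!
`A(s) = arccos (cos y cos s + sin y cos φ sin s)` is the spherical distance from a fixed point to a
point moving at unit speed along a great circle. Hence `A(0) = y`, `y - s ≤ A(s) ≤ y + s`,
`|A'| ≤ 1` and `A'' = cot A · (1 - A'²)`, so the second derivative of `A^{-q}` is at most
`q(q+1) A^{-q-2} + q A^{-q-1} / sin A`, and Taylor's theorem on `[0, θ]` gives the bound as long as
`sin A ≥ sin (y - θ) / 3` there, which concavity of `sin` guarantees when `y + 2θ ≤ π`.
When `y + 2θ > π` instead, `sin (y - θ) ≤ 3θ` and the first-order bound
`|R| ≤ 2qθ (y - θ)^{-q-1}` already suffices.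
-/

open Real Set

lemma abs_sub_sub_deriv_mul_le {f f' f'' : ℝ → ℝ} {a b M : ℝ} (hab : a ≤ b)
    (hf : ∀ x ∈ Icc a b, HasDerivAt f (f' x) x) (hf' : ∀ x ∈ Icc a b, HasDerivAt f' (f'' x) x)
    (hM : ∀ x ∈ Icc a b, |f'' x| ≤ M) :
    |f b - f a - f' a * (b - a)| ≤ M * (b - a) ^ 2 := by
  have hf'_lip : ∀ x ∈ Icc a b, |f' x - f' a| ≤ M * (b - a) := fun x hx => by
    have := norm_image_sub_le_of_norm_deriv_le_segment' (fun y hy => (hf' y hy).hasDerivWithinAt)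
      (fun y hy => hM y (Ico_subset_Icc_self hy)) x hx
    have hM0 : 0 ≤ M := (abs_nonneg _).trans (hM a (left_mem_Icc.2 hab))
    exact this.trans (by gcongr; exact hx.2)
  have := norm_image_sub_le_of_norm_deriv_le_segment' (f := fun x => f x - f' a * (x - a))
    (fun x hx => (((hf x hx).sub ((hasDerivAt_sub_const_iff a).2 (hasDerivAt_id x)
      |>.const_mul (f' a))).congr_deriv (by ring)).hasDerivWithinAt)
    (fun x hx => hf'_lip x (Ico_subset_Icc_self hx)) b (right_mem_Icc.2 hab)
  simp only [sub_self, mul_zero, sub_zero, Real.norm_eq_abs] at this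
  rw [sub_right_comm]
  exact this.trans_eq (by ring)

lemma abs_deriv_rpow_neg_le {q r x d : ℝ} (hq : 0 ≤ q) (hr : 0 < r) (hrx : r ≤ x) (hd : |d| ≤ 1) :
    |d * (-q) * x ^ (-q - 1)| ≤ q * r ^ (-q - 1) := by
  have hx : 0 < x := hr.trans_le hrx
  rw [abs_mul, abs_mul, abs_neg, abs_of_nonneg hq, abs_of_pos (rpow_pos_of_pos hx _)]
  calc |d| * q * x ^ (-q - 1) ≤ 1 * q * r ^ (-q - 1) :=
        mul_le_mul (mul_le_mul_of_nonneg_right hd hq)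
          (rpow_le_rpow_of_nonpos hr hrx (by linarith)) (rpow_pos_of_pos hx _).le (by positivity)
    _ = q * r ^ (-q - 1) := by ring

lemma abs_rpow_neg_sub_sub_le {A D : ℝ → ℝ} {q r a b : ℝ} (hq : 0 ≤ q) (hr : 0 < r) (hab : a ≤ b)
    (hA : ContinuousOn A (Icc a b)) (hAD : ∀ s ∈ Ico a b, HasDerivAt A (D s) s)
    (hrA : ∀ s ∈ Icc a b, r ≤ A s) (hD : ∀ s ∈ Ico a b, |D s| ≤ 1) :
    |A b ^ (-q) - A a ^ (-q) - D a * (-q) * A a ^ (-q - 1) * (b - a)|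
      ≤ 2 * q * r ^ (-q - 1) * (b - a) := by
  rcases hab.eq_or_lt with rfl | hlt
  · simp
  have hApos : ∀ s ∈ Icc a b, 0 < A s := fun s hs => hr.trans_le (hrA s hs)
  have hmvt := norm_image_sub_le_of_norm_deriv_right_le_segment
    (hA.rpow_const fun s hs => Or.inl (hApos s hs).ne')
    (fun s hs => ((hAD s hs).rpow_const (Or.inl (hApos s (Ico_subset_Icc_self hs)).ne')
      |>.hasDerivWithinAt))
    (fun s hs => abs_deriv_rpow_neg_le hq hr (hrA s (Ico_subset_Icc_self hs)) (hD s hs))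
    b (right_mem_Icc.2 hab)
  have hlin := abs_deriv_rpow_neg_le hq hr (hrA a (left_mem_Icc.2 hab)) (hD a (left_mem_Ico.2 hlt))
  calc _ ≤ |A b ^ (-q) - A a ^ (-q)| + |D a * (-q) * A a ^ (-q - 1)| * (b - a) := by
        rw [← abs_of_pos (sub_pos.2 hlt), ← abs_mul, abs_of_pos (sub_pos.2 hlt)]
        exact abs_sub _ _
    _ ≤ q * r ^ (-q - 1) * (b - a) + q * r ^ (-q - 1) * (b - a) := by
        gcongr
        exact hmvt
    _ = 2 * q * r ^ (-q - 1) * (b - a) := by ring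

lemma abs_rpow_neg_sub_sub_le_sq {A D D' : ℝ → ℝ} {q r K a b : ℝ} (hq : 0 ≤ q) (hr : 0 < r)
    (hab : a ≤ b) (hAD : ∀ s ∈ Icc a b, HasDerivAt A (D s) s)
    (hDD' : ∀ s ∈ Icc a b, HasDerivAt D (D' s) s) (hrA : ∀ s ∈ Icc a b, r ≤ A s)
    (hD : ∀ s ∈ Icc a b, |D s| ≤ 1) (hD' : ∀ s ∈ Icc a b, |D' s| ≤ K) :
    |A b ^ (-q) - A a ^ (-q) - D a * (-q) * A a ^ (-q - 1) * (b - a)|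
      ≤ (q * (q + 1) * r ^ (-q - 2) + q * r ^ (-q - 1) * K) * (b - a) ^ 2 := by
  refine abs_sub_sub_deriv_mul_le hab
    (fun s hs => (hAD s hs).rpow_const (Or.inl (hr.trans_le (hrA s hs)).ne'))
    (fun s hs => ((hDD' s hs).mul_const (-q)).mul
      ((hAD s hs).rpow_const (Or.inl (hr.trans_le (hrA s hs)).ne'))) fun s hs => ?_
  rw [show -q - 1 - 1 = -q - 2 by ring]
  have hA := hr.trans_le (hrA s hs)
  have hP₁ := rpow_le_rpow_of_nonpos hr (hrA s hs) (by linarith : -q - 1 ≤ 0)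
  have hP₂ := rpow_le_rpow_of_nonpos hr (hrA s hs) (by linarith : -q - 2 ≤ 0)
  have hD2 : D s ^ 2 ≤ 1 := by rw [← sq_abs]; nlinarith [abs_nonneg (D s), hD s hs]
  set P₁ := A s ^ (-q - 1)
  set P₂ := A s ^ (-q - 2)
  have hP₁0 : 0 ≤ P₁ := (rpow_pos_of_pos hA _).le
  have hP₂0 : 0 ≤ P₂ := (rpow_pos_of_pos hA _).le
  calc _ = |q * (q + 1) * P₂ * D s ^ 2 - q * P₁ * D' s| := by
        ring_nf
    _ ≤ q * (q + 1) * P₂ * D s ^ 2 + q * P₁ * |D' s| := by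
        refine (abs_sub _ _).trans_eq ?_
        rw [abs_of_nonneg (by positivity), abs_mul, abs_of_nonneg (by positivity)]
    _ ≤ q * (q + 1) * r ^ (-q - 2) * 1 + q * r ^ (-q - 1) * K := by
        gcongr
        exact hD' s hs
    _ = q * (q + 1) * r ^ (-q - 2) + q * r ^ (-q - 1) * K := by ring

-- The distance on the unit sphere from a fixed point `N` to the unit-speed great circle `P s`,
-- where `α = ⟪P 0, N⟫` and `β = ⟪P' 0, N⟫`; in particular `α ^ 2 + β ^ 2 ≤ 1`.
noncomputable def sphDist (α β s : ℝ) : ℝ := arccos (α * cos s + β * sin s)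

noncomputable def sphDistDeriv (α β s : ℝ) : ℝ := (α * sin s - β * cos s) / sin (sphDist α β s)

section
variable {α β : ℝ}

lemma continuous_sphDist : Continuous (sphDist α β) :=
  continuous_arccos.comp (by fun_prop)

lemma cos_sphDist (h : α ^ 2 + β ^ 2 ≤ 1) (s : ℝ) :
    cos (sphDist α β s) = α * cos s + β * sin s := by
  have hsq : (α * cos s + β * sin s) ^ 2 ≤ 1 := by
    nlinarith [sin_sq_add_cos_sq s, sq_nonneg (α * sin s - β * cos s)]
  obtain ⟨h₁, h₂⟩ := abs_le.1 ((sq_le_one_iff_abs_le_one _).1 hsq)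
  exact cos_arccos h₁ h₂

lemma hasDerivAt_sphDist {s : ℝ} (hs : sin (sphDist α β s) ≠ 0) :
    HasDerivAt (sphDist α β) (sphDistDeriv α β s) s := by
  have ht : α * cos s + β * sin s ≠ -1 ∧ α * cos s + β * sin s ≠ 1 := by
    constructor <;> intro ht <;> simp [sphDist, ht] at hs
  have hinner : HasDerivAt (fun s => α * cos s + β * sin s) (α * -sin s + β * cos s) s :=
    ((hasDerivAt_cos s).const_mul α).add ((hasDerivAt_sin s).const_mul β)
  refine ((hasDerivAt_arccos ht.1 ht.2).comp s hinner).congr_deriv ?_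
  rw [sphDistDeriv, sphDist, sin_arccos]
  ring

lemma abs_sphDistDeriv_le_one (h : α ^ 2 + β ^ 2 ≤ 1) (s : ℝ) : |sphDistDeriv α β s| ≤ 1 := by
  have hsin : 0 ≤ sin (sphDist α β s) :=
    sin_nonneg_of_nonneg_of_le_pi (arccos_nonneg _) (arccos_le_pi _)
  rw [sphDistDeriv, abs_div, abs_of_nonneg hsin]
  refine div_le_one_of_le₀ (abs_le_of_sq_le_sq ?_ hsin) hsin
  rw [sin_sq, cos_sphDist h]
  nlinarith [sin_sq_add_cos_sq s]

lemma hasDerivAt_sphDistDeriv (h : α ^ 2 + β ^ 2 ≤ 1) {s : ℝ} (hs : sin (sphDist α β s) ≠ 0) :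
    HasDerivAt (sphDistDeriv α β)
      (cos (sphDist α β s) * (1 - sphDistDeriv α β s ^ 2) / sin (sphDist α β s)) s := by
  have hnum : HasDerivAt (fun s => α * sin s - β * cos s) (α * cos s - β * -sin s) s :=
    ((hasDerivAt_sin s).const_mul α).sub ((hasDerivAt_cos s).const_mul β)
  refine (hnum.div (hasDerivAt_sphDist hs).sin hs).congr_deriv ?_
  rw [sphDistDeriv, cos_sphDist h]
  field_simp
  ring

end

section
variable {y c : ℝ}

lemma cos_sq_add_sin_mul_sq_le_one (hc : c ∈ Icc (-1) 1) : cos y ^ 2 + (sin y * c) ^ 2 ≤ 1 := by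
  have : c ^ 2 ≤ 1 := by nlinarith [hc.1, hc.2]
  nlinarith [sin_sq_add_cos_sq y, sq_nonneg (sin y)]

lemma sphDist_zero (hy : y ∈ Icc 0 π) : sphDist (cos y) (sin y * c) 0 = y := by
  simp [sphDist, arccos_cos hy.1 hy.2]

lemma sphDistDeriv_zero (hy : y ∈ Ioo 0 π) : sphDistDeriv (cos y) (sin y * c) 0 = -c := by
  have := (sin_pos_of_pos_of_lt_pi hy.1 hy.2).ne'
  simp only [sphDistDeriv, sphDist_zero (Ioo_subset_Icc_self hy), sin_zero, cos_zero]
  field_simp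
  ring

lemma sphDist_mem_Icc (hc : c ∈ Icc (-1) 1) {s : ℝ} (hs : 0 ≤ s) (hsy : s ≤ y) (hyπ : y + s ≤ π) :
    sphDist (cos y) (sin y * c) s ∈ Icc (y - s) (y + s) := by
  have hsiny : 0 ≤ sin y := sin_nonneg_of_nonneg_of_le_pi (by linarith) (by linarith)
  have hsins : 0 ≤ sin s := sin_nonneg_of_nonneg_of_le_pi hs (by linarith)
  have hss := mul_nonneg hsiny hsins
  constructor
  · rw [← arccos_cos (by linarith : 0 ≤ y - s) (by linarith)]
    refine arccos_le_arccos ?_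
    rw [cos_sub]
    nlinarith [hc.2]
  · rw [← arccos_cos (by linarith : 0 ≤ y + s) hyπ]
    refine arccos_le_arccos ?_
    rw [cos_add]
    nlinarith [hc.1]

end

lemma sin_le_sin_of_mem_Icc {θ x : ℝ} (hθ : 0 ≤ θ) (hx : x ∈ Icc θ (π - θ)) : sin θ ≤ sin x := by
  have := strictConcaveOn_sin_Icc.concaveOn.min_le_of_mem_Icc
    ⟨hθ, by linarith [hx.1, hx.2]⟩ ⟨by linarith [hx.1, hx.2], by linarith⟩ hx
  rwa [sin_pi_sub, min_self] at this

lemma sin_le_three_mul_sin {θ a x : ℝ} (hθ : 0 ≤ θ) (ha : θ ≤ a) (haπ : a + 3 * θ ≤ π)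
    (hx : x ∈ Icc a (a + 2 * θ)) : sin a ≤ 3 * sin x := by
  have hsin_nonneg : ∀ z ∈ Icc 0 π, 0 ≤ sin z := fun z hz => sin_nonneg_of_nonneg_of_le_pi hz.1 hz.2
  have hend : sin a ≤ 3 * sin (a + 2 * θ) := by
    set w := π - (a + 2 * θ)
    have hw : sin θ ≤ sin w := sin_le_sin_of_mem_Icc hθ ⟨by linarith, by linarith⟩
    have hw0 : 0 ≤ sin w := hsin_nonneg w ⟨by linarith, by linarith⟩
    have h2θ : sin (2 * θ) ≤ 2 * sin θ := by
      rw [sin_two_mul]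
      nlinarith [cos_le_one θ, hsin_nonneg θ ⟨hθ, by linarith⟩]
    calc sin a = sin w * cos (2 * θ) + cos w * sin (2 * θ) := by
          rw [← sin_add, ← sin_pi_sub]; congr 1; ring
      _ ≤ sin w + sin (2 * θ) := by
          nlinarith [cos_le_one (2 * θ), cos_le_one w,
            hsin_nonneg (2 * θ) ⟨by linarith, by linarith⟩]
      _ ≤ 3 * sin (a + 2 * θ) := by rw [← sin_pi_sub (a + 2 * θ)]; linarith
  have hmin := strictConcaveOn_sin_Icc.concaveOn.min_le_of_mem_Icc
    ⟨by linarith, by linarith⟩ ⟨by linarith, by linarith⟩ hx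
  have : sin a ≤ 3 * min (sin a) (sin (a + 2 * θ)) := by
    rw [mul_min_of_nonneg _ _ (by norm_num)]
    exact le_min (by linarith [hsin_nonneg a ⟨by linarith, by linarith⟩]) hend
  linarith

section
variable {q y c θ : ℝ}

lemma sphDist_rpow_neg_linear_term (hy : y ∈ Ioo 0 π) :
    sphDistDeriv (cos y) (sin y * c) 0 * (-q) * sphDist (cos y) (sin y * c) 0 ^ (-q - 1) * (θ - 0)
      = q * c / y ^ (q + 1) * θ := by
  rw [sphDistDeriv_zero hy, sphDist_zero (Ioo_subset_Icc_self hy), show -q - 1 = -(q + 1) by ring,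
    rpow_neg hy.1.le]
  ring

lemma sphDist_rpow_neg_remainder_le (hq : 0 ≤ q) (hc : c ∈ Icc (-1) 1) (hθ : 0 < θ)
    (hθy : 2 * θ ≤ y) (hyπ : y + θ ≤ π) :
    |sphDist (cos y) (sin y * c) θ ^ (-q) - y ^ (-q) - q * c / y ^ (q + 1) * θ|
      ≤ 2 * q * (y - θ) ^ (-q - 1) * θ := by
  have hA : ∀ s ∈ Icc 0 θ, sphDist (cos y) (sin y * c) s ∈ Icc (y - s) (y + s) :=
    fun s hs => sphDist_mem_Icc hc hs.1 (by linarith [hs.2]) (by linarith [hs.2])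
  have key := abs_rpow_neg_sub_sub_le (D := sphDistDeriv (cos y) (sin y * c)) hq
    (by linarith : 0 < y - θ) hθ.le continuous_sphDist.continuousOn
    (fun s hs => hasDerivAt_sphDist (sin_pos_of_pos_of_lt_pi
      (by linarith [(hA s (Ico_subset_Icc_self hs)).1, hs.2])
      (by linarith [(hA s (Ico_subset_Icc_self hs)).2, hs.2])).ne')
    (fun s hs => by linarith [(hA s hs).1, hs.2])
    (fun s _ => abs_sphDistDeriv_le_one (cos_sq_add_sin_mul_sq_le_one hc) s)
  rwa [sphDist_rpow_neg_linear_term ⟨by linarith, by linarith⟩,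
    sphDist_zero ⟨by linarith, by linarith⟩, sub_zero] at key

lemma sphDist_rpow_neg_remainder_le_sq (hq : 0 ≤ q) (hc : c ∈ Icc (-1) 1) (hθ : 0 < θ)
    (hθy : 2 * θ ≤ y) (hyπ : y + 2 * θ ≤ π) :
    |sphDist (cos y) (sin y * c) θ ^ (-q) - y ^ (-q) - q * c / y ^ (q + 1) * θ|
      ≤ (q * (q + 1) * (y - θ) ^ (-q - 2) + 3 * q * ((y - θ) ^ (-q - 1) / sin (y - θ)))
        * θ ^ 2 := by
  have hαβ := cos_sq_add_sin_mul_sq_le_one (y := y) hc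
  have hsin : 0 < sin (y - θ) := sin_pos_of_pos_of_lt_pi (by linarith) (by linarith)
  have hA : ∀ s ∈ Icc 0 θ, sphDist (cos y) (sin y * c) s ∈ Icc (y - θ) (y - θ + 2 * θ) := by
    intro s hs
    have := sphDist_mem_Icc (y := y) hc hs.1 (by linarith [hs.2]) (by linarith [hs.2])
    exact ⟨by linarith [this.1, hs.2], by linarith [this.2, hs.2]⟩
  have hsinA : ∀ s ∈ Icc 0 θ, sin (y - θ) ≤ 3 * sin (sphDist (cos y) (sin y * c) s) :=
    fun s hs => sin_le_three_mul_sin hθ.le (by linarith) (by linarith) (hA s hs)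
  have hsinA_pos : ∀ s ∈ Icc 0 θ, 0 < sin (sphDist (cos y) (sin y * c) s) :=
    fun s hs => by linarith [hsinA s hs]
  have hD' : ∀ s ∈ Icc 0 θ, |cos (sphDist (cos y) (sin y * c) s)
      * (1 - sphDistDeriv (cos y) (sin y * c) s ^ 2) / sin (sphDist (cos y) (sin y * c) s)|
      ≤ 3 / sin (y - θ) := by
    intro s hs
    have hD := abs_sphDistDeriv_le_one hαβ s
    have hD2 : 0 ≤ 1 - sphDistDeriv (cos y) (sin y * c) s ^ 2 := by
      nlinarith [abs_nonneg (sphDistDeriv (cos y) (sin y * c) s),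
        sq_abs (sphDistDeriv (cos y) (sin y * c) s)]
    rw [abs_div, abs_of_pos (hsinA_pos s hs), div_le_div_iff₀ (hsinA_pos s hs) hsin, abs_mul,
      abs_of_nonneg hD2]
    calc _ ≤ 1 * 1 * sin (y - θ) := by
          gcongr
          exacts [abs_cos_le_one _, by linarith [sq_nonneg (sphDistDeriv (cos y) (sin y * c) s)]]
      _ ≤ 3 * sin (sphDist (cos y) (sin y * c) s) := by linarith [hsinA s hs]
  have key := abs_rpow_neg_sub_sub_le_sq hq (by linarith : 0 < y - θ) hθ.le
    (fun s hs => hasDerivAt_sphDist (hsinA_pos s hs).ne')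
    (fun s hs => hasDerivAt_sphDistDeriv hαβ (hsinA_pos s hs).ne')
    (fun s hs => (hA s hs).1) (fun s _ => abs_sphDistDeriv_le_one hαβ s) hD'
  rw [sphDist_rpow_neg_linear_term ⟨by linarith, by linarith⟩,
    sphDist_zero ⟨by linarith, by linarith⟩, sub_zero] at key
  exact key.trans_eq (by ring)

lemma sphDist_rpow_neg_remainder_le_six (hq : q ∈ Icc 0 1) (hc : c ∈ Icc (-1) 1) (hθ : 0 < θ)
    (hθy : 2 * θ ≤ y) (hyπ : y + θ ≤ π) :
    |sphDist (cos y) (sin y * c) θ ^ (-q) - y ^ (-q) - q * c / y ^ (q + 1) * θ|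
      ≤ 6 * θ ^ 2 * ((y - θ) ^ (-q - 2) + (y - θ) ^ (-q - 1) / sin (y - θ)) := by
  obtain ⟨hq0, hq1⟩ := hq
  have hyθ : 0 < y - θ := by linarith
  have hsin : 0 < sin (y - θ) := sin_pos_of_pos_of_lt_pi hyθ (by linarith)
  have hX0 : 0 ≤ (y - θ) ^ (-q - 2) := (rpow_pos_of_pos hyθ _).le
  have hY0 : 0 ≤ (y - θ) ^ (-q - 1) := (rpow_pos_of_pos hyθ _).le
  have hZ0 : 0 ≤ (y - θ) ^ (-q - 1) / sin (y - θ) := div_nonneg hY0 hsin.le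
  rcases le_or_gt (y + 2 * θ) π with hy | hy
  · refine (sphDist_rpow_neg_remainder_le_sq hq0 hc hθ hθy hy).trans ?_
    nlinarith [mul_nonneg (mul_nonneg (sq_nonneg θ) hX0) (by nlinarith : 0 ≤ 6 - q * (q + 1)),
      mul_nonneg (mul_nonneg (sq_nonneg θ) hZ0) (by linarith : 0 ≤ 6 - q * 3)]
  · have hsin3 : sin (y - θ) ≤ 3 * θ := by
      rw [← sin_pi_sub]
      linarith [sin_le (by linarith : 0 ≤ π - (y - θ))]
    refine (sphDist_rpow_neg_remainder_le hq0 hc hθ hθy hyπ).trans ?_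
    have : 2 * q * (y - θ) ^ (-q - 1) * θ ≤ 6 * θ ^ 2 * ((y - θ) ^ (-q - 1) / sin (y - θ)) := by
      rw [mul_div_assoc', le_div_iff₀ hsin]
      nlinarith [mul_nonneg (mul_nonneg hY0 hθ.le) (by linarith : 0 ≤ 3 * θ - sin (y - θ)),
        mul_nonneg (mul_nonneg (sq_nonneg θ) hY0) (by linarith : 0 ≤ 1 - q)]
    nlinarith [mul_nonneg (sq_nonneg θ) hX0]

end

/-- With `a(θ,y,φ) = arccos (sin θ sin y cos φ + cos θ cos y)` and `q ∈ (0,1)`,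
there are constants `C > 0` and `θ₀ > 0` such that for all `θ ∈ (0,θ₀]`,
`y ∈ [2θ, π−θ]` and `φ ∈ [0,π]`, the Taylor remainder
`R(θ,y,φ) = a(θ,y,φ)^{−q} − y^{−q} − (q cos φ / y^{q+1}) θ` satisfies
`|R| ≤ C θ² (|y−θ|^{−(q+2)} + |y−θ|^{−(q+1)} / sin (y−θ))`. -/
theorem arccos_power_taylor_remainder (q : ℝ) (hq : q ∈ Ioo (0:ℝ) 1) :
    ∃ C : ℝ, 0 < C ∧ ∃ θ₀ : ℝ, 0 < θ₀ ∧
      ∀ θ ∈ Ioc (0:ℝ) θ₀, ∀ y ∈ Icc (2 * θ) (π - θ), ∀ φ ∈ Icc (0:ℝ) π,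
        |(Real.arccos (Real.sin θ * Real.sin y * Real.cos φ + Real.cos θ * Real.cos y)) ^ (-q)
            - y ^ (-q) - (q * Real.cos φ / y ^ (q + 1)) * θ|
          ≤ C * θ ^ 2 *
              (1 / |y - θ| ^ (q + 2) + 1 / (|y - θ| ^ (q + 1) * Real.sin (y - θ))) := by
  refine ⟨6, by norm_num, 1, one_pos, ?_⟩
  rintro θ ⟨hθ, -⟩ y ⟨hθy, hyπ⟩ φ -
  have hyθ : 0 < y - θ := by linarith
  have harccos : arccos (sin θ * sin y * cos φ + cos θ * cos y)
      = sphDist (cos y) (sin y * cos φ) θ := by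
    rw [sphDist]; ring_nf
  have hX : 1 / |y - θ| ^ (q + 2) = (y - θ) ^ (-q - 2) := by
    rw [abs_of_pos hyθ, one_div, ← rpow_neg hyθ.le, neg_add']
  have hY : 1 / (|y - θ| ^ (q + 1) * sin (y - θ)) = (y - θ) ^ (-q - 1) / sin (y - θ) := by
    rw [abs_of_pos hyθ, one_div, mul_inv, ← rpow_neg hyθ.le, neg_add', div_eq_mul_inv]
  rw [harccos, hX, hY]
  exact sphDist_rpow_neg_remainder_le_six (Ioo_subset_Icc_self hq)
    ⟨neg_one_le_cos φ, cos_le_one φ⟩ hθ hθy (by linarith)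
end

section
/- For q ∈ (0,2) and every t ∈ ℝ, the Kummer-type identity 1 − e^{−t} ₁F₁(1 − q/2; 1; t) = (qt/2) · ₂F₂(q/2 + 1, 1; 2, 2; −t) holds, where ₁F₁ and ₂F₂ are the confluent and generalized hypergeometric series. -/
/-!
Since `(a)_k = k! · multichoose a k`, the series `₁F₁(a; 1; t)` is
`∑ multichoose a k · t^k / k!`.
Kummer's transformation `e^{-t} ₁F₁(a; 1; t) = ₁F₁(1 - a; 1; -t)` follows from the Cauchy
product with the exponential series: as `multichoose a k = (-1)^k choose (-a) k`, its
coefficients collapse by Chu–Vandermonde. For `a = 1 - q/2` the constant term of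
`₁F₁(q/2; 1; -t)` cancels the `1`, and shifting the index of the remaining terms with
`(q/2)_{k+1} = (q/2) (q/2 + 1)_k` gives the `₂F₂` series.
-/

open Real Set

/-- The rising factorial `(a)_k = a (a+1) ⋯ (a+k−1)`. -/
def risingFactorial (a : ℝ) (k : ℕ) : ℝ := ∏ i ∈ Finset.range k, (a + i)

open Finset
open scoped Nat

theorem Ring.multichoose_eq_neg_one_pow_mul_choose_neg {R : Type*} [CommRing R] [BinomialRing R]
    (a : R) (k : ℕ) : multichoose a k = (-1) ^ k * choose (-a) k := by
  rw [choose_neg', Units.smul_def, Int.coe_negOnePow_natCast, zsmul_eq_mul, ← mul_assoc]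
  push_cast
  rw [← mul_pow, neg_one_mul, neg_neg, one_pow, one_mul]

theorem Ring.sum_antidiagonal_neg_one_pow_mul_choose_mul_multichoose {R : Type*} [CommRing R]
    [BinomialRing R] (a : R) (n : ℕ) :
    ∑ ij ∈ antidiagonal n, (-1) ^ ij.1 * (n.choose ij.1 : R) * multichoose a ij.2 =
      (-1) ^ n * multichoose (1 - a) n := by
  calc ∑ ij ∈ antidiagonal n, (-1) ^ ij.1 * (n.choose ij.1 : R) * multichoose a ij.2
      = (-1) ^ n * ∑ ij ∈ antidiagonal n, choose (n : R) ij.1 * choose (-a) ij.2 := by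
        rw [mul_sum]
        refine sum_congr rfl fun ij hij => ?_
        rw [← mem_antidiagonal.mp hij, multichoose_eq_neg_one_pow_mul_choose_neg, choose_natCast,
          pow_add]
        ring
    _ = (-1) ^ n * multichoose (1 - a) n := by
        rw [← add_choose_eq _ (Commute.all _ _), multichoose_eq, sub_add_comm,
          add_sub_cancel_right, sub_eq_add_neg]

theorem ascPochhammer_eval_eq_prod_range {R : Type*} [CommSemiring R] (r : R) (n : ℕ) :
    (ascPochhammer R n).eval r = ∏ i ∈ range n, (r + i) := by
  induction n with
  | zero => simp
  | succ n ih => rw [ascPochhammer_succ_eval, ih, prod_range_succ]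

theorem risingFactorial_eq_factorial_mul_multichoose (a : ℝ) (k : ℕ) :
    risingFactorial a k = k ! * Ring.multichoose a k := by
  rw [← nsmul_eq_mul, Ring.factorial_nsmul_multichoose_eq_ascPochhammer,
    Polynomial.ascPochhammer_smeval_eq_eval, ascPochhammer_eval_eq_prod_range, risingFactorial]

theorem risingFactorial_one (k : ℕ) : risingFactorial 1 k = k ! := by
  rw [risingFactorial_eq_factorial_mul_multichoose, Ring.multichoose_one, mul_one]

theorem risingFactorial_two (k : ℕ) : risingFactorial 2 k = (k + 1)! := by
  rw [risingFactorial_eq_factorial_mul_multichoose, Ring.multichoose_two, Nat.factorial_succ]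
  push_cast
  ring

theorem risingFactorial_succ' (a : ℝ) (k : ℕ) :
    risingFactorial a (k + 1) = a * risingFactorial (a + 1) k := by
  rw [risingFactorial, risingFactorial, prod_range_succ', mul_comm]
  congr 1
  · simp
  · exact prod_congr rfl fun i _ => by push_cast; ring

theorem abs_risingFactorial_le (a : ℝ) (k : ℕ) :
    |risingFactorial a k| ≤ (|a| + 1) ^ k * k ! := by
  calc |risingFactorial a k| = ∏ i ∈ range k, |a + i| := abs_prod _ _
    _ ≤ ∏ i ∈ range k, (|a| + 1) * ((i : ℝ) + 1) := by
        gcongr with i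
        calc |a + i| ≤ |a| + i := by simpa using abs_add_le a i
          _ ≤ (|a| + 1) * ((i : ℝ) + 1) := by
            nlinarith [abs_nonneg a, (i.cast_nonneg : (0 : ℝ) ≤ i)]
    _ = (|a| + 1) ^ k * k ! := by
        rw [prod_mul_distrib, prod_const, card_range, ← prod_range_add_one_eq_factorial]
        push_cast
        rfl

theorem abs_multichoose_le (a : ℝ) (k : ℕ) : |Ring.multichoose a k| ≤ (|a| + 1) ^ k := by
  have hk : (0 : ℝ) < k ! := by positivity
  have hrf := abs_risingFactorial_le a k
  rw [risingFactorial_eq_factorial_mul_multichoose, abs_mul, abs_of_pos hk, mul_comm] at hrf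
  exact le_of_mul_le_mul_right hrf hk

theorem summable_norm_multichoose_mul_pow_div_factorial (a t : ℝ) :
    Summable fun k => ‖Ring.multichoose a k * t ^ k / (k ! : ℝ)‖ := by
  refine (Real.summable_pow_div_factorial ((|a| + 1) * |t|)).of_nonneg_of_le
    (fun _ => norm_nonneg _) fun k => ?_
  rw [norm_div, norm_mul, norm_pow, Real.norm_eq_abs, Real.norm_eq_abs, Real.norm_natCast, mul_pow]
  gcongr
  exact abs_multichoose_le a k

theorem sum_antidiagonal_neg_one_pow_div_factorial_mul_multichoose_div_factorial
    (a : ℝ) (n : ℕ) :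
    ∑ ij ∈ antidiagonal n, (-1) ^ ij.1 / (ij.1 ! : ℝ) * (Ring.multichoose a ij.2 / ij.2 !) =
      (-1) ^ n * Ring.multichoose (1 - a) n / n ! := by
  rw [← Ring.sum_antidiagonal_neg_one_pow_mul_choose_mul_multichoose, sum_div]
  refine sum_congr rfl fun ⟨i, j⟩ hij => ?_
  rw [← mem_antidiagonal.mp hij, Nat.cast_add_choose]
  field_simp

theorem exp_neg_mul_tsum_multichoose_mul_pow_div_factorial (a t : ℝ) :
    exp (-t) * ∑' k, Ring.multichoose a k * t ^ k / k ! =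
      ∑' n, Ring.multichoose (1 - a) n * (-t) ^ n / n ! := by
  rw [exp_eq_exp_ℝ, ← (NormedSpace.expSeries_div_hasSum_exp (-t)).tsum_eq,
    tsum_mul_tsum_eq_tsum_sum_antidiagonal_of_summable_norm
      (NormedSpace.norm_expSeries_div_summable (-t))
      (summable_norm_multichoose_mul_pow_div_factorial a t)]
  refine tsum_congr fun n => ?_
  calc ∑ ij ∈ antidiagonal n,
          (-t) ^ ij.1 / (ij.1 ! : ℝ) * (Ring.multichoose a ij.2 * t ^ ij.2 / ij.2 !)
      = t ^ n * ∑ ij ∈ antidiagonal n,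
          (-1) ^ ij.1 / (ij.1 ! : ℝ) * (Ring.multichoose a ij.2 / ij.2 !) := by
        rw [mul_sum]
        refine sum_congr rfl fun ⟨i, j⟩ hij => ?_
        rw [← mem_antidiagonal.mp hij, neg_pow t, pow_add]
        ring
    _ = Ring.multichoose (1 - a) n * (-t) ^ n / n ! := by
        rw [sum_antidiagonal_neg_one_pow_div_factorial_mul_multichoose_div_factorial, neg_pow t]
        ring

theorem kummer_identity_general (q : ℝ) (t : ℝ) :
    1 - Real.exp (-t) *
        ∑' k : ℕ, (risingFactorial (1 - q / 2) k / risingFactorial 1 k) *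
          t ^ k / (Nat.factorial k : ℝ)
      = (q * t / 2) *
        ∑' k : ℕ,
          (risingFactorial (q / 2 + 1) k * risingFactorial 1 k /
            (risingFactorial 2 k * risingFactorial 2 k)) *
            (-t) ^ k / (Nat.factorial k : ℝ) := by
  have h₁F₁ (k : ℕ) :
      risingFactorial (1 - q / 2) k / risingFactorial 1 k * t ^ k / (k ! : ℝ) =
        Ring.multichoose (1 - q / 2) k * t ^ k / k ! := by
    rw [risingFactorial_eq_factorial_mul_multichoose, risingFactorial_one]
    field_simp
  have h₂F₂ (k : ℕ) : q * t / 2 * (risingFactorial (q / 2 + 1) k * risingFactorial 1 k /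
      (risingFactorial 2 k * risingFactorial 2 k) * (-t) ^ k / (k ! : ℝ)) =
      -(Ring.multichoose (q / 2) (k + 1) * (-t) ^ (k + 1) / (k + 1)!) := by
    have hshift : Ring.multichoose (q / 2) (k + 1) =
        q / 2 * risingFactorial (q / 2 + 1) k / (k + 1)! := by
      rw [eq_div_iff (by positivity), ← risingFactorial_succ',
        risingFactorial_eq_factorial_mul_multichoose, mul_comm]
    rw [hshift, risingFactorial_one, risingFactorial_two]
    field_simp
    ring
  rw [tsum_congr h₁F₁, exp_neg_mul_tsum_multichoose_mul_pow_div_factorial, sub_sub_cancel,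
    (summable_norm_multichoose_mul_pow_div_factorial (q / 2) (-t)).of_norm.tsum_eq_zero_add,
    ← tsum_mul_left, tsum_congr h₂F₂, tsum_neg]
  simp

/-- For `q ∈ (0,2)` and every `t ∈ ℝ`, the Kummer-type identity
`1 − e^{−t} ₁F₁(1−q/2; 1; t) = (qt/2) ₂F₂(q/2+1, 1; 2, 2; −t)` holds, where
`₁F₁(a; b; t) = ∑_k ((a)_k/(b)_k) t^k/k!` and
`₂F₂(a₁,a₂; b₁,b₂; t) = ∑_k ((a₁)_k (a₂)_k/((b₁)_k (b₂)_k)) t^k/k!`. -/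
theorem kummer_identity (q : ℝ) (hq : q ∈ Ioo (0:ℝ) 2) (t : ℝ) :
    1 - Real.exp (-t) *
        ∑' k : ℕ, (risingFactorial (1 - q / 2) k / risingFactorial 1 k) *
          t ^ k / (Nat.factorial k : ℝ)
      = (q * t / 2) *
        ∑' k : ℕ,
          (risingFactorial (q / 2 + 1) k * risingFactorial 1 k /
            (risingFactorial 2 k * risingFactorial 2 k)) *
            (-t) ^ k / (Nat.factorial k : ℝ) :=
  kummer_identity_general q t
end

section
/- Let C : [0,π] → ℝ be a continuous isotropic correlation function on the circle S¹ of an isotropic random field, and suppose C has fractal index α, i.e., lim_{θ↓0} (C(0) − C(θ))/θ^α = b for some b > 0. Then α ≤ 2. -/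
open Real Set Filter Topology

/-!
Positive semidefiniteness at the three points `0, θ, 2θ` with weights `1, -2, 1` (a second
difference) gives `C 0 - C (2θ) ≤ 4 (C 0 - C θ)`. Dividing by `θ ^ α` and letting `θ ↓ 0`, the
left side tends to `2 ^ α b` and the right side to `4 b`, so `2 ^ α ≤ 4`.
-/

theorem sub_apply_two_mul_le_four_mul_sub {C : ℝ → ℝ} (heven : ∀ θ : ℝ, C (-θ) = C θ)
    (hpsd : ∀ (n : ℕ) (x : Fin n → ℝ) (c : Fin n → ℝ),
      0 ≤ ∑ i, ∑ j, c i * c j * C (x i - x j)) (θ : ℝ) :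
    C 0 - C (2 * θ) ≤ 4 * (C 0 - C θ) := by
  have h := hpsd 3 ![0, θ, 2 * θ] ![1, -2, 1]
  simp only [Fin.sum_univ_three, Matrix.cons_val_zero, Matrix.cons_val_one, Matrix.cons_val_two,
    Matrix.head_cons, Matrix.tail_cons, sub_self] at h
  rw [show (0 : ℝ) - θ = -θ by ring, show θ - 2 * θ = -θ by ring,
    show (0 : ℝ) - 2 * θ = -(2 * θ) by ring, show 2 * θ - θ = θ by ring, sub_zero, sub_zero,
    heven, heven] at h
  linarith

theorem tendsto_const_mul_nhdsGT_zero {c : ℝ} (hc : 0 < c) :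
    Tendsto (c * ·) (𝓝[>] 0) (𝓝[>] 0) :=
  tendsto_iff_comap.2 (comap_mulLeft_nhdsGT_zero hc).ge

theorem Filter.Tendsto.comp_const_mul_div_rpow {g : ℝ → ℝ} {α b c : ℝ}
    (hg : Tendsto (fun θ => g θ / θ ^ α) (𝓝[>] 0) (𝓝 b)) (hc : 0 < c) :
    Tendsto (fun θ => g (c * θ) / θ ^ α) (𝓝[>] 0) (𝓝 (c ^ α * b)) := by
  refine ((hg.comp (tendsto_const_mul_nhdsGT_zero hc)).const_mul (c ^ α)).congr' ?_
  filter_upwards [self_mem_nhdsWithin] with θ (hθ : 0 < θ)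
  have hθα : 0 < θ ^ α := rpow_pos_of_pos hθ α
  have hcα : 0 < c ^ α := rpow_pos_of_pos hc α
  simp only [Function.comp_apply, mul_rpow hc.le hθ.le]
  field_simp

theorem fractal_index_le_two_general (C : ℝ → ℝ)
    (heven : ∀ θ : ℝ, C (-θ) = C θ)
    (hpsd : ∀ (n : ℕ) (x : Fin n → ℝ) (c : Fin n → ℝ),
      0 ≤ ∑ i, ∑ j, c i * c j * C (x i - x j))
    (α : ℝ) (b : ℝ) (hb : 0 < b)
    (hfrac : Tendsto (fun θ => (C 0 - C θ) / θ ^ α) (nhdsWithin 0 (Ioi 0)) (nhds b)) :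
    α ≤ 2 := by
  have hle : (2 : ℝ) ^ α * b ≤ 4 * b := by
    refine le_of_tendsto_of_tendsto (hfrac.comp_const_mul_div_rpow two_pos)
      (hfrac.const_mul 4) ?_
    filter_upwards [self_mem_nhdsWithin] with θ (hθ : 0 < θ)
    rw [← mul_div_assoc]
    gcongr
    exact sub_apply_two_mul_le_four_mul_sub heven hpsd θ
  have h2α : (2 : ℝ) ^ α ≤ 2 ^ (2 : ℝ) := by
    rw [rpow_two, show (2 : ℝ) ^ 2 = 4 by norm_num]
    exact le_of_mul_le_mul_right hle hb
  exact (rpow_le_rpow_left_iff one_lt_two).1 h2α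

/-- Let `C : ℝ → ℝ` be continuous, even, `2π`-periodic and positive semidefinite
(so that its restriction to `[0,π]` is an isotropic correlation function on the
circle `S¹`), with `C 0 = 1`.  If `C` has fractal index `α > 0`, i.e.
`(C 0 − C θ)/θ^α → b > 0` as `θ ↓ 0`, then `α ≤ 2`. -/
theorem fractal_index_le_two (C : ℝ → ℝ)
    (hcont : Continuous C)
    (heven : ∀ θ : ℝ, C (-θ) = C θ)
    (hper : ∀ θ : ℝ, C (θ + 2 * π) = C θ)
    (hC0 : C 0 = 1)
    (hpsd : ∀ (n : ℕ) (x : Fin n → ℝ) (c : Fin n → ℝ),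
      0 ≤ ∑ i, ∑ j, c i * c j * C (x i - x j))
    (α : ℝ) (hα : 0 < α) (b : ℝ) (hb : 0 < b)
    (hfrac : Tendsto (fun θ => (C 0 - C θ) / θ ^ α) (nhdsWithin 0 (Ioi 0)) (nhds b)) :
    α ≤ 2 :=
  fractal_index_le_two_general C heven hpsd α b hb hfrac
end
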